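/- arXiv:2501.17652 — 7 statements merged into one kernel-verified Lean document; each statement's English description precedes it below -/
import Mathlib

section
/- Let H be a real Hilbert space, let μ > 0, let K : H → H be a bounded linear operator satisfying ⟨K w, w⟩ ≥ μ ‖K w‖² for all w ∈ H, and let N : H → H be a map satisfying ⟨N u₁ − N u₂, u₁ − u₂⟩ ≤ 0 for all u₁, u₂ ∈ H. Then for every v ∈ H, the operator equation u = K v + K (N u) has at most one solution u ∈ H. -/
open scoped RealInnerProductSpace

/-- If `K` is a bounded linear operator on a real Hilbert space with
`⟨K w, w⟩ ≥ μ ‖K w‖²` for some `μ > 0`, and `N` is dissipative, then for every `v`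
the equation `u = K v + K (N u)` has at most one solution. -/
theorem uniqueness_of_fixed_point_dissipative
    {H : Type*} [NormedAddCommGroup H] [InnerProductSpace ℝ H] [CompleteSpace H]
    (μ : ℝ) (hμ : 0 < μ)
    (K : H →L[ℝ] H) (hK : ∀ w : H, μ * ‖K w‖ ^ 2 ≤ ⟪K w, w⟫)
    (N : H → H) (hN : ∀ u₁ u₂ : H, ⟪N u₁ - N u₂, u₁ - u₂⟫ ≤ 0)
    (v : H) (u₁ u₂ : H)
    (h₁ : u₁ = K v + K (N u₁)) (h₂ : u₂ = K v + K (N u₂)) :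
    u₁ = u₂ := by
  set w := N u₁ - N u₂ with hw
  have hdiff : u₁ - u₂ = K w := by
    rw [h₁, h₂, hw, map_sub]; abel
  have h1 : ⟪K w, w⟫ ≤ 0 := by
    have := hN u₁ u₂
    rwa [← hw, hdiff, real_inner_comm] at this
  have h2 : μ * ‖K w‖ ^ 2 ≤ 0 := le_trans (hK w) h1
  have h3 : ‖K w‖ ^ 2 ≤ 0 := by nlinarith
  have h4 : K w = 0 := by
    have : ‖K w‖ = 0 := by nlinarith [norm_nonneg (K w)]
    simpa using this
  have := hdiff.trans h4
  exact sub_eq_zero.mp this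
end

section
/- Let H be a real Hilbert space, let K : H → H be a bounded linear operator satisfying ⟨K u, u⟩ ≥ 0 for all u ∈ H, let β > 0, and let N : H → H be a map satisfying ⟨N u₁ − N u₂, u₁ − u₂⟩ ≤ −β ‖u₁ − u₂‖² for all u₁, u₂ ∈ H. Then for every v ∈ H, the operator equation u = K (N u) + K v has at most one solution u ∈ H. -/
open scoped RealInnerProductSpace

/-- If `K` is a monotone bounded linear operator on a real Hilbert space
and `N` is strongly dissipative with constant `β > 0`, then for every `v` the equation
`u = K (N u) + K v` has at most one solution. -/
theorem uniqueness_of_fixed_point_strongly_dissipative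
    {H : Type*} [NormedAddCommGroup H] [InnerProductSpace ℝ H] [CompleteSpace H]
    (K : H →L[ℝ] H) (hK : ∀ u : H, 0 ≤ ⟪K u, u⟫)
    (β : ℝ) (hβ : 0 < β)
    (N : H → H) (hN : ∀ u₁ u₂ : H, ⟪N u₁ - N u₂, u₁ - u₂⟫ ≤ -β * ‖u₁ - u₂‖ ^ 2)
    (v : H) (u₁ u₂ : H)
    (h₁ : u₁ = K (N u₁) + K v) (h₂ : u₂ = K (N u₂) + K v) :
    u₁ = u₂ := by
  set w := N u₁ - N u₂ with hw
  have hdiff : u₁ - u₂ = K w := by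
    rw [h₁, h₂, hw, map_sub]; abel
  have h0 : 0 ≤ ⟪w, u₁ - u₂⟫ := by
    rw [hdiff, real_inner_comm]; exact hK w
  have h1 := hN u₁ u₂
  have hnorm : ‖u₁ - u₂‖ ^ 2 ≤ 0 := by nlinarith
  have : u₁ - u₂ = 0 := by
    have := sq_nonneg ‖u₁ - u₂‖
    have hn : ‖u₁ - u₂‖ = 0 := by nlinarith
    exact norm_eq_zero.mp hn
  exact sub_eq_zero.mp this
end

section
/- Let H be a real Hilbert space, let K : H → H be a bounded linear operator with ⟨K w, w⟩ ≥ 0 for all w ∈ H, let β > 0, and let N : H → H satisfy ⟨N u₁ − N u₂, u₁ − u₂⟩ ≤ −β ‖u₁ − u₂‖² for all u₁, u₂ ∈ H. Let v ∈ H, let q ≥ 0, and let n, p be positive integers with n ≤ p. Suppose u_n and u_p are elements of H satisfying u_j = K (N u_j) + K v + (1/j) N u_j for j = n and j = p, and that ‖N u_n‖ ≤ q and ‖N u_p‖ ≤ q. Then β ‖u_p − u_n‖² ≤ 4 q² / n. -/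
open scoped RealInnerProductSpace

/-- Cauchy-type estimate for the regularized solutions: if `K` is monotone,
`N` is strongly dissipative with constant `β`, and `u_n, u_p` satisfy the regularized
equations `u_j = K (N u_j) + K v + (1/j) N u_j` with `‖N u_n‖, ‖N u_p‖ ≤ q`, then
`β ‖u_p − u_n‖² ≤ 4 q² / n`. -/
theorem cauchy_estimate_regularized_solutions
    {H : Type*} [NormedAddCommGroup H] [InnerProductSpace ℝ H] [CompleteSpace H]
    (K : H →L[ℝ] H) (hK : ∀ w : H, 0 ≤ ⟪K w, w⟫)
    (β : ℝ) (hβ : 0 < β)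
    (N : H → H) (hN : ∀ u₁ u₂ : H, ⟪N u₁ - N u₂, u₁ - u₂⟫ ≤ -β * ‖u₁ - u₂‖ ^ 2)
    (v : H) (q : ℝ) (hq : 0 ≤ q)
    (n p : ℕ) (hn : 0 < n) (hnp : n ≤ p)
    (uₙ uₚ : H)
    (hun : uₙ = K (N uₙ) + K v + (1 / n : ℝ) • N uₙ)
    (hup : uₚ = K (N uₚ) + K v + (1 / p : ℝ) • N uₚ)
    (hqn : ‖N uₙ‖ ≤ q) (hqp : ‖N uₚ‖ ≤ q) :
    β * ‖uₚ - uₙ‖ ^ 2 ≤ 4 * q ^ 2 / n := by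
  have hnpos : (0 : ℝ) < n := by exact_mod_cast hn
  have hppos : (0 : ℝ) < p := by exact_mod_cast hn.trans_le hnp
  set a := N uₚ with ha
  set b := N uₙ with hb
  set d := uₚ - uₙ with hd
  set w := (1 / p : ℝ) • a - (1 / n : ℝ) • b with hw
  have hdecomp : d = K (a - b) + w := by
    rw [hd, hup, hun, hw, map_sub]
    abel
  have h1 : ⟪a - b, d⟫ ≤ -β * ‖d‖ ^ 2 := hN uₚ uₙ
  have h2 : ⟪a - b, d⟫ = ⟪a - b, K (a - b)⟫ + ⟪a - b, w⟫ := by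
    rw [hdecomp, inner_add_right]
  have h3 : 0 ≤ ⟪a - b, K (a - b)⟫ := by
    rw [real_inner_comm]; exact hK _
  have h4 : β * ‖d‖ ^ 2 ≤ -⟪a - b, w⟫ := by nlinarith
  have h5 : -⟪a - b, w⟫ ≤ ‖a - b‖ * ‖w‖ := by
    have := abs_real_inner_le_norm (a - b) w
    have := neg_abs_le ⟪a - b, w⟫
    linarith [abs_nonneg ⟪a - b, w⟫]
  have hab : ‖a - b‖ ≤ 2 * q := by
    calc ‖a - b‖ ≤ ‖a‖ + ‖b‖ := norm_sub_le _ _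
    _ ≤ 2 * q := by linarith
  have hwn : ‖w‖ ≤ 2 * q / n := by
    have h1p : (1 : ℝ) / p ≤ 1 / n := by
      apply one_div_le_one_div_of_le hnpos; exact_mod_cast hnp
    calc ‖w‖ ≤ ‖(1 / p : ℝ) • a‖ + ‖(1 / n : ℝ) • b‖ := norm_sub_le _ _
    _ = (1 / p) * ‖a‖ + (1 / n) * ‖b‖ := by
        rw [norm_smul, norm_smul, Real.norm_eq_abs, Real.norm_eq_abs,
          abs_of_pos (by positivity), abs_of_pos (by positivity)]
    _ ≤ (1 / n) * q + (1 / n) * q := by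
        gcongr
    _ = 2 * q / n := by ring
  have : ‖a - b‖ * ‖w‖ ≤ 2 * q * (2 * q / n) := by
    apply mul_le_mul hab hwn (norm_nonneg _) (by positivity)
  calc β * ‖d‖ ^ 2 ≤ ‖a - b‖ * ‖w‖ := h4.trans h5
  _ ≤ 2 * q * (2 * q / n) := this
  _ = 4 * q ^ 2 / n := by ring
end

section
/- Let E be a real Hilbert space, let μ > 0, let A : E → E be a linear map satisfying ⟨−A x, x⟩ ≥ μ ‖x‖² for all x ∈ E, let T > 0, and let u : [0, T] → E be continuous. Suppose f : [0, T] → E is differentiable with continuous derivative, f(0) = 0, and f′(t) = u(t) + A f(t) for all t ∈ [0, T]. Then ∫₀ᵀ ⟨f(t), u(t)⟩ dt ≥ μ ∫₀ᵀ ‖f(t)‖² dt. -/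
open scoped RealInnerProductSpace

open MeasureTheory Set

/-! Energy estimate: `d/dt ‖f‖² = 2 ⟪f, f'⟫ = 2 ⟪f, u⟫ + 2 ⟪f, A f⟫ ≤ 2 (⟪f, u⟫ - μ ‖f‖²)`,
so integrating over `[0, T]` and using `f 0 = 0` gives
`0 ≤ ‖f T‖² ≤ 2 ∫₀ᵀ (⟪f, u⟫ - μ ‖f‖²)`. -/

section

variable {E : Type*} [NormedAddCommGroup E] [InnerProductSpace ℝ E]

theorem sq_norm_sub_sq_norm_le_two_mul_integral {f f' : ℝ → E} {φ : ℝ → ℝ} {a b : ℝ}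
    (hab : a ≤ b) (hf : ContinuousOn f (Icc a b))
    (hf' : ∀ t ∈ Ioo a b, HasDerivAt f (f' t) t) (hφ : IntegrableOn φ (Icc a b))
    (hle : ∀ t ∈ Ioo a b, ⟪f t, f' t⟫ ≤ φ t) :
    ‖f b‖ ^ 2 - ‖f a‖ ^ 2 ≤ 2 * ∫ t in a..b, φ t := by
  rw [← intervalIntegral.integral_const_mul]
  exact intervalIntegral.sub_le_integral_of_hasDeriv_right_of_le hab (hf.norm.pow 2)
    (fun t ht => (hf' t ht).norm_sq.hasDerivWithinAt) (hφ.const_mul 2)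
    (fun t ht => by linarith [hle t ht])

theorem inner_add_apply_le_of_coercive {μ : ℝ} {A : E →ₗ[ℝ] E}
    (hA : ∀ x : E, μ * ‖x‖ ^ 2 ≤ ⟪-A x, x⟫) (x v : E) :
    ⟪x, v + A x⟫ ≤ ⟪x, v⟫ - μ * ‖x‖ ^ 2 := by
  have hx := hA x
  rw [inner_neg_left, real_inner_comm] at hx
  rw [inner_add_right]
  linarith

end

theorem coercivity_integral_estimate_general
    {E : Type*} [NormedAddCommGroup E] [InnerProductSpace ℝ E]
    (μ : ℝ)
    (A : E →ₗ[ℝ] E) (hA : ∀ x : E, μ * ‖x‖ ^ 2 ≤ ⟪-A x, x⟫)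
    (T : ℝ) (hT : 0 < T)
    (u f f' : ℝ → E)
    (hu : ContinuousOn u (Set.Icc 0 T))
    (hf' : ∀ t ∈ Set.Icc 0 T, HasDerivAt f (f' t) t)
    (hf0 : f 0 = 0)
    (heq : ∀ t ∈ Set.Icc 0 T, f' t = u t + A (f t)) :
    μ * ∫ t in (0:ℝ)..T, ‖f t‖ ^ 2 ≤ ∫ t in (0:ℝ)..T, ⟪f t, u t⟫ := by
  have hf : ContinuousOn f (Icc 0 T) := fun t ht => (hf' t ht).continuousAt.continuousWithinAt
  have hfu : ContinuousOn (fun t => ⟪f t, u t⟫) (Icc 0 T) := hf.inner hu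
  have hff : ContinuousOn (fun t => μ * ‖f t‖ ^ 2) (Icc 0 T) :=
    continuousOn_const.mul (hf.norm.pow 2)
  have energy := sq_norm_sub_sq_norm_le_two_mul_integral
    (φ := fun t => ⟪f t, u t⟫ - μ * ‖f t‖ ^ 2) hT.le hf
    (fun t ht => hf' t (Ioo_subset_Icc_self ht)) (hfu.sub hff).integrableOn_Icc
    (fun t ht => by
      rw [heq t (Ioo_subset_Icc_self ht)]
      exact inner_add_apply_le_of_coercive hA (f t) (u t))
  have hint := intervalIntegral.integral_sub (hfu.intervalIntegrable_of_Icc (μ := volume) hT.le)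
    (hff.intervalIntegrable_of_Icc hT.le)
  rw [hint, intervalIntegral.integral_const_mul, hf0, norm_zero] at energy
  nlinarith [sq_nonneg ‖f T‖]

/-- If `⟨-A x, x⟩ ≥ μ ‖x‖²` for all `x`, `f(0) = 0` and
`f′(t) = u(t) + A f(t)` on `[0, T]` (with `u` and `f′` continuous), then
`∫₀ᵀ ⟨f(t), u(t)⟩ dt ≥ μ ∫₀ᵀ ‖f(t)‖² dt`. -/
theorem coercivity_integral_estimate
    {E : Type*} [NormedAddCommGroup E] [InnerProductSpace ℝ E] [CompleteSpace E]
    (μ : ℝ) (hμ : 0 < μ)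
    (A : E →ₗ[ℝ] E) (hA : ∀ x : E, μ * ‖x‖ ^ 2 ≤ ⟪-A x, x⟫)
    (T : ℝ) (hT : 0 < T)
    (u f f' : ℝ → E)
    (hu : ContinuousOn u (Set.Icc 0 T))
    (hf' : ∀ t ∈ Set.Icc 0 T, HasDerivAt f (f' t) t)
    (hf'cont : ContinuousOn f' (Set.Icc 0 T))
    (hf0 : f 0 = 0)
    (heq : ∀ t ∈ Set.Icc 0 T, f' t = u t + A (f t)) :
    μ * ∫ t in (0:ℝ)..T, ‖f t‖ ^ 2 ≤ ∫ t in (0:ℝ)..T, ⟪f t, u t⟫ :=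
  coercivity_integral_estimate_general μ A hA T hT u f f' hu hf' hf0 heq
end

section
/- Let E be a real Banach space, let a > 0, m ≥ 0, L ≥ 0, let b : [0, a] → ℝ be a nonnegative square-integrable function, let v : [0, a] → E be continuous, and let u : [0, a] → E be continuous with ‖u(t)‖ ≤ m ∫₀ᵗ (b(s) + L ‖u(s)‖) ds + m ∫₀ᵗ ‖v(s)‖ ds for all t ∈ [0, a]. Then for all t ∈ [0, a], ‖u(t)‖ ≤ m √a (‖b‖_{L²(0,a)} + ‖v‖_{L²(0,a)}) e^{m L t}, and consequently the L² norm of u satisfies (∫₀ᵃ ‖u(t)‖² dt)^{1/2} ≤ m a (‖b‖_{L²(0,a)} + ‖v‖_{L²(0,a)}) e^{m L a}. -/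
/-!
Cauchy–Schwarz bounds `∫₀ᵗ b` and `∫₀ᵗ ‖v‖` by `√a` times the `L²(0,a)` norms of `b` and `v`, which
turns the hypothesis into the linear integral inequality `‖u t‖ ≤ K + m L ∫₀ᵗ ‖u‖` with
`K = m √a (‖b‖ + ‖v‖)`. Grönwall's inequality gives `‖u t‖ ≤ K e^{m L t}`, and bounding `‖u‖²` by
`(K e^{m L a})²` on `[0, a]` gives the `L²` estimate.
-/

open MeasureTheory Set Real
open scoped Interval

theorem le_mul_exp_of_le_add_mul_integral {φ : ℝ → ℝ} {t₀ T K c : ℝ} (hc : 0 ≤ c)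
    (hφ : ContinuousOn φ (Icc t₀ T))
    (h : ∀ t ∈ Icc t₀ T, φ t ≤ K + c * ∫ s in t₀..t, φ s) :
    ∀ t ∈ Icc t₀ T, φ t ≤ K * exp (c * (t - t₀)) := by
  set F : ℝ → ℝ := fun t => K + c * ∫ s in t₀..t, φ s
  have hφint : ∀ t ∈ Icc t₀ T, IntervalIntegrable φ volume t₀ t := fun t ht =>
    (hφ.mono (Icc_subset_Icc_right ht.2)).intervalIntegrable_of_Icc ht.1
  have hF_cont : ContinuousOn F (Icc t₀ T) := by
    rcases le_or_gt t₀ T with hT | hT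
    · have := intervalIntegral.continuousOn_primitive_interval' (hφint T ⟨hT, le_rfl⟩)
        left_mem_uIcc
      exact continuousOn_const.add (continuousOn_const.mul (uIcc_of_le hT ▸ this))
    · simp [Icc_eq_empty_of_lt hT]
  have hF_deriv : ∀ x ∈ Ico t₀ T, HasDerivWithinAt F (c * φ x) (Ici x) x := by
    intro x hx
    have hnhds : Icc t₀ T ∈ nhdsWithin x (Ioi x) :=
      ordConnected_Icc.mem_nhdsGT ⟨hx.1, hx.2.le⟩ ⟨hx.1.trans hx.2.le, le_rfl⟩ hx.2
    refine ((intervalIntegral.integral_hasDerivWithinAt_right (hφint x ⟨hx.1, hx.2.le⟩)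
      ⟨_, hnhds, hφ.aestronglyMeasurable measurableSet_Icc⟩
      ((hφ x ⟨hx.1, hx.2.le⟩).mono_of_mem_nhdsWithin hnhds)).const_mul c).const_add K
  have hF_le := le_gronwallBound_of_liminf_deriv_right_le (δ := K) (K := c) (ε := 0) hF_cont
    (fun x hx _ hr => (hF_deriv x hx).liminf_right_slope_le hr) (by simp [F])
    (fun x hx => by simpa using mul_le_mul_of_nonneg_left (h x ⟨hx.1, hx.2.le⟩) hc)
  intro t ht
  simpa [gronwallBound_ε0] using (h t ht).trans (hF_le t ht)

theorem memLp_two_of_sq_intervalIntegrable {f : ℝ → ℝ} {s t : ℝ} (hf : ∀ x, 0 ≤ f x)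
    (h : IntervalIntegrable (fun x => f x ^ 2) volume s t) :
    MemLp f 2 (volume.restrict (Ι s t)) := by
  have hsq : IntegrableOn (fun x => f x ^ 2) (Ι s t) := intervalIntegrable_iff.mp h
  -- `f = √(f²)` recovers the measurability of `f` from that of `f²`.
  have hmeas : AEStronglyMeasurable f (volume.restrict (Ι s t)) := by
    simpa only [sqrt_sq (hf _)] using
      continuous_sqrt.comp_aestronglyMeasurable hsq.aestronglyMeasurable
  exact (memLp_two_iff_integrable_sq hmeas).mpr hsq

theorem IntervalIntegrable.of_sq_of_nonneg {f : ℝ → ℝ} {s t : ℝ} (hf : ∀ x, 0 ≤ f x)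
    (h : IntervalIntegrable (fun x => f x ^ 2) volume s t) : IntervalIntegrable f volume s t := by
  have : IsFiniteMeasure (volume.restrict (Ι s t)) := by rw [uIoc]; infer_instance
  exact intervalIntegrable_iff.mpr ((memLp_two_of_sq_intervalIntegrable hf h).integrable one_le_two)

theorem integral_le_sqrt_mul_sqrt_integral_sq {f : ℝ → ℝ} {s t : ℝ} (hst : s ≤ t)
    (hf : ∀ x, 0 ≤ f x) (h : IntervalIntegrable (fun x => f x ^ 2) volume s t) :
    ∫ x in s..t, f x ≤ √(t - s) * √(∫ x in s..t, f x ^ 2) := by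
  have hmem := memLp_two_of_sq_intervalIntegrable hf h
  rw [uIoc_of_le hst] at hmem
  have holder := integral_mul_le_Lp_mul_Lq_of_nonneg (μ := volume.restrict (Ioc s t))
    Real.HolderConjugate.two_two (.of_forall hf) (.of_forall fun _ => zero_le_one)
    (by simpa using hmem) (by simpa using memLp_const (1 : ℝ))
  simp only [mul_one, one_rpow, integral_const, measureReal_restrict_apply_univ,
    Real.volume_real_Ioc_of_le hst, smul_eq_mul] at holder
  rw [intervalIntegral.integral_of_le hst, intervalIntegral.integral_of_le hst, mul_comm,
    sqrt_eq_rpow, sqrt_eq_rpow]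
  simpa only [rpow_two] using holder

theorem integral_le_sqrt_mul_sqrt_integral_sq_of_le {f : ℝ → ℝ} {s t T : ℝ} (hst : s ≤ t)
    (htT : t ≤ T) (hf : ∀ x, 0 ≤ f x) (h : IntervalIntegrable (fun x => f x ^ 2) volume s T) :
    ∫ x in s..t, f x ≤ √(T - s) * √(∫ x in s..T, f x ^ 2) := by
  calc ∫ x in s..t, f x ≤ √(t - s) * √(∫ x in s..t, f x ^ 2) :=
        integral_le_sqrt_mul_sqrt_integral_sq hst hf
          (h.mono_set (uIcc_subset_uIcc left_mem_uIcc (mem_uIcc_of_le hst htT)))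
    _ ≤ √(T - s) * √(∫ x in s..T, f x ^ 2) := by
        gcongr
        exact intervalIntegral.integral_mono_interval le_rfl hst htT
          (.of_forall fun x => sq_nonneg (f x)) h

theorem sqrt_integral_norm_sq_le {E : Type*} [NormedAddCommGroup E] {f : ℝ → E} {s t C : ℝ}
    (hst : s ≤ t) (hC : 0 ≤ C) (hf : ∀ x ∈ Icc s t, ‖f x‖ ≤ C) :
    √(∫ x in s..t, ‖f x‖ ^ 2) ≤ √(t - s) * C := by
  have hsq : ∀ x ∈ Ι s t, ‖‖f x‖ ^ 2‖ ≤ C ^ 2 := fun x hx => by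
    rw [uIoc_of_le hst] at hx
    simpa using pow_le_pow_left₀ (norm_nonneg _) (hf x (Ioc_subset_Icc_self hx)) 2
  calc √(∫ x in s..t, ‖f x‖ ^ 2) ≤ √(C ^ 2 * |t - s|) :=
        sqrt_le_sqrt <|
          (le_abs_self _).trans (intervalIntegral.norm_integral_le_of_norm_le_const hsq)
    _ = √(t - s) * C := by
        rw [abs_of_nonneg (sub_nonneg.mpr hst), sqrt_mul (sq_nonneg C), sqrt_sq hC, mul_comm]

/-- Gronwall-type growth estimate. If
`‖u(t)‖ ≤ m ∫₀ᵗ (b(s) + L ‖u(s)‖) ds + m ∫₀ᵗ ‖v(s)‖ ds` on `[0, a]`, then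
`‖u(t)‖ ≤ m √a (‖b‖_{L²} + ‖v‖_{L²}) e^{m L t}` on `[0, a]`, and consequently
`(∫₀ᵃ ‖u(t)‖² dt)^{1/2} ≤ m a (‖b‖_{L²} + ‖v‖_{L²}) e^{m L a}`. -/
theorem growth_estimate_solution_operator
    {E : Type*} [NormedAddCommGroup E] [NormedSpace ℝ E]
    (a : ℝ) (ha : 0 < a) (m L : ℝ) (hm : 0 ≤ m) (hL : 0 ≤ L)
    (b : ℝ → ℝ) (hb : ∀ s, 0 ≤ b s)
    (hbint : IntervalIntegrable (fun s => (b s) ^ 2) MeasureTheory.volume 0 a)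
    (v u : ℝ → E)
    (hv : ContinuousOn v (Set.Icc 0 a)) (hu : ContinuousOn u (Set.Icc 0 a))
    (hgrow : ∀ t ∈ Set.Icc 0 a,
      ‖u t‖ ≤ m * (∫ s in (0:ℝ)..t, (b s + L * ‖u s‖)) +
        m * ∫ s in (0:ℝ)..t, ‖v s‖) :
    (∀ t ∈ Set.Icc 0 a,
      ‖u t‖ ≤ m * Real.sqrt a *
        (Real.sqrt (∫ s in (0:ℝ)..a, (b s) ^ 2) +
          Real.sqrt (∫ s in (0:ℝ)..a, ‖v s‖ ^ 2)) * Real.exp (m * L * t)) ∧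
    Real.sqrt (∫ t in (0:ℝ)..a, ‖u t‖ ^ 2) ≤
      m * a * (Real.sqrt (∫ s in (0:ℝ)..a, (b s) ^ 2) +
        Real.sqrt (∫ s in (0:ℝ)..a, ‖v s‖ ^ 2)) * Real.exp (m * L * a) := by
  set B := √(∫ s in (0:ℝ)..a, (b s) ^ 2)
  set V := √(∫ s in (0:ℝ)..a, ‖v s‖ ^ 2)
  have hv2 : IntervalIntegrable (fun s => ‖v s‖ ^ 2) volume 0 a :=
    (hv.norm.pow 2).intervalIntegrable_of_Icc ha.le
  have hpre : ∀ t ∈ Icc 0 a, ‖u t‖ ≤ m * √a * (B + V) + m * L * ∫ s in (0:ℝ)..t, ‖u s‖ := by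
    intro t ht
    have hsub : uIcc 0 t ⊆ uIcc 0 a := uIcc_subset_uIcc left_mem_uIcc (mem_uIcc_of_le ht.1 ht.2)
    have hgrow_t := hgrow t ht
    rw [intervalIntegral.integral_add
      ((IntervalIntegrable.of_sq_of_nonneg hb hbint).mono_set hsub)
      (((hu.norm.intervalIntegrable_of_Icc ha.le).mono_set hsub).const_mul L),
      intervalIntegral.integral_const_mul] at hgrow_t
    calc ‖u t‖ ≤ _ := hgrow_t
      _ ≤ m * (√a * B + L * ∫ s in (0:ℝ)..t, ‖u s‖) + m * (√a * V) := by
        gcongr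
        · simpa using integral_le_sqrt_mul_sqrt_integral_sq_of_le ht.1 ht.2 hb hbint
        · simpa using
            integral_le_sqrt_mul_sqrt_integral_sq_of_le ht.1 ht.2 (fun s => norm_nonneg (v s)) hv2
      _ = m * √a * (B + V) + m * L * ∫ s in (0:ℝ)..t, ‖u s‖ := by ring
  have hpointwise : ∀ t ∈ Icc 0 a, ‖u t‖ ≤ m * √a * (B + V) * exp (m * L * t) := by
    simpa using le_mul_exp_of_le_add_mul_integral (mul_nonneg hm hL) hu.norm hpre
  refine ⟨hpointwise, ?_⟩
  calc √(∫ t in (0:ℝ)..a, ‖u t‖ ^ 2) ≤ √(a - 0) * (m * √a * (B + V) * exp (m * L * a)) :=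
        sqrt_integral_norm_sq_le ha.le (by positivity) fun t ht =>
          (hpointwise t ht).trans (by gcongr; exact ht.2)
    _ = m * a * (B + V) * exp (m * L * a) := by
        rw [sub_zero]
        linear_combination m * (B + V) * exp (m * L * a) * mul_self_sqrt ha.le
end

section
/- Let H be a real Hilbert space, let K : H → H be a compact bounded linear operator with ⟨K u, u⟩ ≥ 0 for all u ∈ H, let β > 0, and let N : H → H be continuous, map bounded subsets of H to bounded subsets of H, and satisfy ⟨N u₁ − N u₂, u₁ − u₂⟩ ≤ −β ‖u₁ − u₂‖² for all u₁, u₂ ∈ H. Then for every v ∈ H there exists exactly one u ∈ H with u = K (N u) + K v. -/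
/-!
Write `M = -N`, a continuous map with `⟪M x - M y, x - y⟫ ≥ β ‖x - y‖²`. For `ε > 0` the operator
`K + ε` is invertible with monotone inverse `J` (Lax–Milgram), so the regularised equation
`u = K (N u) + K v + ε N u` is equivalent to `J u + M u = J (K v)`, whose left-hand side is again
continuous and strongly monotone, hence surjective. Testing the regularised equation against
`N u + v` and using the monotonicity of `K` bounds its solutions uniformly in `ε ∈ (0, 1]`;
compactness of `K` then yields a convergent subsequence as `ε → 0`, whose limit solves the equation.
Uniqueness is immediate from the monotonicity of `K` and the strong dissipativity of `N`.

A continuous strongly monotone `F` is surjective by Galerkin approximation. On a finite-dimensional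
subspace one inducts on the dimension: after splitting off a line `ℝ e`, the problem on the
complement is solved at every height `t`, and the remaining scalar equation in `t` is strictly
increasing with linear growth, so the intermediate value theorem applies. A weak cluster point `x`
of the bounded Galerkin solutions satisfies Minty's inequality `0 ≤ ⟪b - F y, x - y⟫` for all `y`,
and testing it at `y = x - t w` with `t → 0⁺` gives `F x = b`.
-/

open scoped RealInnerProductSpace
open Filter Topology Set Submodule Module

theorem surjective_of_strongly_increasing {g : ℝ → ℝ} (hg : Continuous g) {κ : ℝ} (hκ : 0 < κ)
    (h : ∀ s t, κ * (t - s) ^ 2 ≤ (t - s) * (g t - g s)) : Function.Surjective g := by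
  refine hg.surjective ?_ ?_
  · refine tendsto_atTop_mono' atTop ?_
      (tendsto_atTop_add_const_left atTop (g 0) (tendsto_id.const_mul_atTop hκ))
    filter_upwards [eventually_gt_atTop 0] with t ht
    show g 0 + κ * t ≤ g t
    nlinarith [h 0 t]
  · refine tendsto_atBot_mono' atBot ?_
      (tendsto_atBot_add_const_left atBot (g 0) (tendsto_id.const_mul_atBot hκ))
    filter_upwards [eventually_lt_atBot 0] with t ht
    show g t ≤ g 0 + κ * t
    nlinarith [h t 0]

section MonotoneMaps

variable {E : Type*} [NormedAddCommGroup E] [InnerProductSpace ℝ E]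

def StronglyMonotoneWith (α : ℝ) (F : E → E) : Prop :=
  ∀ x y, α * ‖x - y‖ ^ 2 ≤ ⟪F x - F y, x - y⟫

namespace StronglyMonotoneWith

variable {α : ℝ} {F : E → E}

theorem comp_add_right (h : StronglyMonotoneWith α F) (c : E) :
    StronglyMonotoneWith α fun x => F (x + c) := fun x y => by
  simpa using h (x + c) (y + c)

theorem add {γ : ℝ} {G : E → E} (hF : StronglyMonotoneWith α F)
    (hG : StronglyMonotoneWith γ G) : StronglyMonotoneWith (α + γ) (F + G) := fun x y => by
  have := hF x y
  have := hG x y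
  simp only [Pi.add_apply, add_sub_add_comm, inner_add_left]
  linarith

theorem mul_norm_sub_le_of_inner_eq (h : StronglyMonotoneWith α F) {x y w : E}
    (hw : ⟪F x - F y, x - y⟫ = ⟪w, x - y⟫) : α * ‖x - y‖ ≤ ‖w‖ := by
  have hle : α * ‖x - y‖ * ‖x - y‖ ≤ ‖w‖ * ‖x - y‖ := by
    have := h x y
    rw [hw] at this
    nlinarith [real_inner_le_norm w (x - y)]
  rcases (norm_nonneg (x - y)).eq_or_lt with h0 | h0
  · rw [← h0, mul_zero]; exact norm_nonneg w
  · exact le_of_mul_le_mul_right hle h0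

end StronglyMonotoneWith

def GalerkinSolvable (α : ℝ) (V : Submodule ℝ E) : Prop :=
  ∀ F : E → E, Continuous F → StronglyMonotoneWith α F →
    ∀ b, ∃ x ∈ V, ∀ φ ∈ V, ⟪F x - b, φ⟫ = 0

section GalerkinSlices

variable {α : ℝ} {F : E → E} {W : Submodule ℝ E} {e b : E} {z : ℝ → E}

theorem continuous_of_forall_galerkin (hα : 0 < α) (hF : Continuous F)
    (hmono : StronglyMonotoneWith α F) (hzW : ∀ t, z t ∈ W)
    (hz : ∀ t, ∀ φ ∈ W, ⟪F (z t + t • e) - b, φ⟫ = 0) : Continuous z := by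
  rw [continuous_iff_continuousAt]
  intro s
  have hbound : ∀ t, ‖z t - z s‖ ≤ ‖F (z s + s • e) - F (z s + t • e)‖ / α := by
    intro t
    rw [le_div_iff₀' hα]
    refine (hmono.comp_add_right (t • e)).mul_norm_sub_le_of_inner_eq ?_
    have hd := sub_mem (hzW t) (hzW s)
    have ht := hz t _ hd
    have hs := hz s _ hd
    simp only [inner_sub_left] at ht hs ⊢
    linarith
  have hlim : Tendsto (fun t => ‖F (z s + s • e) - F (z s + t • e)‖ / α) (𝓝 s) (𝓝 0) :=
    (by fun_prop : Continuous fun t : ℝ => ‖F (z s + s • e) - F (z s + t • e)‖ / α).tendsto' s 0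
      (by simp)
  rw [ContinuousAt, tendsto_iff_norm_sub_tendsto_zero]
  exact squeeze_zero (fun _ => norm_nonneg _) hbound hlim

theorem sq_le_inner_sub_of_forall_galerkin (hmono : StronglyMonotoneWith α F) (hα : 0 ≤ α)
    (he : ∀ w ∈ W, ⟪w, e⟫ = 0) (hzW : ∀ t, z t ∈ W)
    (hz : ∀ t, ∀ φ ∈ W, ⟪F (z t + t • e) - b, φ⟫ = 0) (s t : ℝ) :
    α * ‖e‖ ^ 2 * (t - s) ^ 2 ≤
      (t - s) * (⟪F (z t + t • e) - b, e⟫ - ⟪F (z s + s • e) - b, e⟫) := by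
  have hd := sub_mem (hzW t) (hzW s)
  have hsub : z t + t • e - (z s + s • e) = (z t - z s) + (t - s) • e := by
    rw [sub_smul]; abel
  have hpyth : ‖z t + t • e - (z s + s • e)‖ ^ 2 = ‖z t - z s‖ ^ 2 + (t - s) ^ 2 * ‖e‖ ^ 2 := by
    rw [hsub, norm_add_sq_real, real_inner_smul_right, he _ hd, norm_smul, mul_pow,
      Real.norm_eq_abs, sq_abs]
    ring
  have hinner : ⟪F (z t + t • e) - F (z s + s • e), z t + t • e - (z s + s • e)⟫ =
      (t - s) * (⟪F (z t + t • e) - b, e⟫ - ⟪F (z s + s • e) - b, e⟫) := by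
    have ht := hz t _ hd
    have hs := hz s _ hd
    rw [hsub, inner_add_right, real_inner_smul_right]
    simp only [inner_sub_left] at ht hs ⊢
    linarith
  have := hmono (z t + t • e) (z s + s • e)
  rw [hpyth, hinner] at this
  nlinarith [mul_nonneg hα (sq_nonneg ‖z t - z s‖)]

end GalerkinSlices

theorem GalerkinSolvable.sup_span_singleton {α : ℝ} {W : Submodule ℝ E} {e : E}
    (hW : GalerkinSolvable α W) (hα : 0 < α) (he : ∀ w ∈ W, ⟪w, e⟫ = 0) (he0 : e ≠ 0) :
    GalerkinSolvable α (W ⊔ ℝ ∙ e) := by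
  intro F hF hmono b
  choose z hzW hz using fun t : ℝ =>
    hW (fun x => F (x + t • e)) (by fun_prop) (hmono.comp_add_right (t • e)) b
  have hzc := continuous_of_forall_galerkin hα hF hmono hzW hz
  obtain ⟨t, ht : ⟪F (z t + t • e) - b, e⟫ = 0⟩ := surjective_of_strongly_increasing (by fun_prop)
    (by positivity) (sq_le_inner_sub_of_forall_galerkin hmono hα.le he hzW hz) 0
  refine ⟨z t + t • e, add_mem_sup (hzW t) (smul_mem _ t (mem_span_singleton_self e)), ?_⟩
  rintro _ hφ
  obtain ⟨w, hw, _, hc, rfl⟩ := mem_sup.mp hφ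
  obtain ⟨c, rfl⟩ := mem_span_singleton.mp hc
  rw [inner_add_right, hz t w hw, real_inner_smul_right, ht, mul_zero, add_zero]

theorem galerkinSolvable_of_finrank_eq {α : ℝ} (hα : 0 < α) :
    ∀ (n : ℕ) (V : Submodule ℝ E) [FiniteDimensional ℝ V], finrank ℝ V = n →
      GalerkinSolvable α V
  | 0, V, _, hV => by
    rw [finrank_eq_zero] at hV
    subst hV
    exact fun F _ _ b => ⟨0, zero_mem _, fun φ hφ => by rw [(mem_bot ℝ).mp hφ, inner_zero_right]⟩
  | n + 1, V, _, hV => by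
    obtain ⟨e, heV, he0⟩ := V.exists_mem_ne_zero_of_ne_bot fun h => by
      rw [h, finrank_bot] at hV
      omega
    have hle : ℝ ∙ e ≤ V := (span_singleton_le_iff_mem e V).mpr heV
    have hW : finrank ℝ ↥((ℝ ∙ e)ᗮ ⊓ V) = n := by
      have := finrank_add_inf_finrank_orthogonal hle
      rw [finrank_span_singleton he0, hV] at this
      omega
    have := (galerkinSolvable_of_finrank_eq hα n _ hW).sup_span_singleton hα
      (fun w hw => (mem_orthogonal_singleton_iff_inner_left.mp hw.1)) he0
    rwa [sup_comm, sup_orthogonal_inf_of_hasOrthogonalProjection hle] at this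

theorem galerkinSolvable_of_finiteDimensional {α : ℝ} (hα : 0 < α) (V : Submodule ℝ E)
    [FiniteDimensional ℝ V] : GalerkinSolvable α V :=
  galerkinSolvable_of_finrank_eq hα _ V rfl

theorem apply_eq_of_forall_inner_sub_nonneg {F : E → E} (hF : Continuous F) {x b : E}
    (h : ∀ y, 0 ≤ ⟪b - F y, x - y⟫) : F x = b := by
  have hdir : ∀ w, 0 ≤ ⟪b - F x, w⟫ := by
    intro w
    have hpos : ∀ t > (0 : ℝ), 0 ≤ ⟪b - F (x - t • w), w⟫ := fun t ht => by
      have := h (x - t • w)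
      rw [sub_sub_cancel, real_inner_smul_right] at this
      exact nonneg_of_mul_nonneg_right this ht
    have hlim : Tendsto (fun t : ℝ => ⟪b - F (x - t • w), w⟫) (𝓝[>] 0) (𝓝 ⟪b - F x, w⟫) :=
      ((by fun_prop : Continuous fun t : ℝ => ⟪b - F (x - t • w), w⟫).tendsto' 0 _
        (by simp)).mono_left nhdsWithin_le_nhds
    exact ge_of_tendsto hlim (eventually_nhdsWithin_of_forall hpos)
  have := hdir (-(b - F x))
  rw [inner_neg_right, neg_nonneg] at this
  exact (sub_eq_zero.mp (real_inner_self_nonpos.mp this)).symm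

theorem exists_tendsto_inner_of_norm_le [CompleteSpace E] {ι : Type*} (𝒰 : Ultrafilter ι)
    {x : ι → E} {C : ℝ} (hx : ∀ i, ‖x i‖ ≤ C) :
    ∃ x₀ : E, ∀ y, Tendsto (fun i => ⟪x i, y⟫) 𝒰 (𝓝 ⟪x₀, y⟫) := by
  let ℓ : ι → WeakDual ℝ E := fun i => StrongDual.toWeakDual (InnerProductSpace.toDual ℝ E (x i))
  obtain ⟨ℓ₀, -, hℓ₀⟩ := (WeakDual.isCompact_closedBall 0 C).ultrafilter_le_nhds (𝒰.map ℓ)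
    (le_principal_iff.mpr <| mem_map.mpr <| univ_mem' fun i => by simpa [ℓ] using hx i)
  refine ⟨(InnerProductSpace.toDual ℝ E).symm (WeakDual.toStrongDual ℓ₀), fun y => ?_⟩
  rw [InnerProductSpace.toDual_symm_apply]
  exact ((WeakDual.eval_continuous y).tendsto ℓ₀).comp hℓ₀

namespace StronglyMonotoneWith

variable [CompleteSpace E] {α : ℝ} {F : E → E}

theorem exists_forall_inner_sub_nonneg (hmono : StronglyMonotoneWith α F) (hα : 0 < α)
    (hF : Continuous F) (b : E) : ∃ x, ∀ y, 0 ≤ ⟪b - F y, x - y⟫ := by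
  -- Galerkin subspaces are indexed by finite subsets of `E`, so no separability is needed.
  choose x hxV hx using fun s : Finset E =>
    galerkinSolvable_of_finiteDimensional hα (span ℝ (s : Set E)) F hF hmono b
  have hbound : ∀ s, ‖x s‖ ≤ ‖b - F 0‖ / α := fun s => by
    rw [le_div_iff₀' hα, ← sub_zero (x s)]
    refine hmono.mul_norm_sub_le_of_inner_eq ?_
    have := hx s (x s) (hxV s)
    simp only [sub_zero, inner_sub_left] at this ⊢
    linarith
  obtain ⟨x₀, hx₀⟩ := exists_tendsto_inner_of_norm_le (Ultrafilter.of atTop) hbound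
  refine ⟨x₀, fun y => ?_⟩
  have hev : ∀ᶠ s in atTop, 0 ≤ ⟪b - F y, x s - y⟫ := by
    filter_upwards [eventually_ge_atTop {y}] with s hs
    have hy : y ∈ span ℝ (s : Set E) := subset_span (by simpa using hs)
    have hgal := hx s _ (sub_mem (hxV s) hy)
    have hmon := hmono (x s) y
    simp only [inner_sub_left] at hgal hmon ⊢
    nlinarith [mul_nonneg hα.le (sq_nonneg ‖x s - y‖)]
  have hlim : Tendsto (fun s => ⟪b - F y, x s - y⟫) (Ultrafilter.of (atTop : Filter (Finset E)))
      (𝓝 ⟪b - F y, x₀ - y⟫) := by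
    convert (hx₀ (b - F y)).sub_const ⟪y, b - F y⟫ using 2 <;>
      rw [← inner_sub_left, real_inner_comm]
  exact ge_of_tendsto hlim (hev.filter_mono (Ultrafilter.of_le _))

theorem surjective (hmono : StronglyMonotoneWith α F) (hα : 0 < α) (hF : Continuous F) :
    Function.Surjective F := fun b =>
  let ⟨x, hx⟩ := hmono.exists_forall_inner_sub_nonneg hα hF b
  ⟨x, apply_eq_of_forall_inner_sub_nonneg hF hx⟩

end StronglyMonotoneWith

end MonotoneMaps

section Regularization

variable {H : Type*} [NormedAddCommGroup H] [InnerProductSpace ℝ H] {K : H →L[ℝ] H}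
  {N : H → H} {β ε : ℝ}

theorem exists_continuousLinearEquiv_eq_add_smul [CompleteSpace H] (hK : ∀ u, 0 ≤ ⟪K u, u⟫)
    (hε : 0 < ε) : ∃ A : H ≃L[ℝ] H, ∀ u, A u = K u + ε • u := by
  have hcoercive : IsCoercive ((innerSL ℝ).comp (K + ε • ContinuousLinearMap.id ℝ H)) :=
    ⟨ε, hε, fun u => by
      simp only [ContinuousLinearMap.comp_apply, innerSL_apply_apply, add_apply,
        smul_apply, ContinuousLinearMap.id_apply, inner_add_left,
        real_inner_smul_left, real_inner_self_eq_norm_mul_norm]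
      nlinarith [hK u]⟩
  exact ⟨hcoercive.continuousLinearEquivOfBilin, fun u => ext_inner_right ℝ fun w => by
    simp only [IsCoercive.continuousLinearEquivOfBilin_apply, ContinuousLinearMap.comp_apply,
      innerSL_apply_apply, add_apply, smul_apply, ContinuousLinearMap.id_apply]⟩

theorem exists_eq_add_smul [CompleteSpace H] (hK : ∀ u, 0 ≤ ⟪K u, u⟫)
    (hN : StronglyMonotoneWith β (-N)) (hβ : 0 < β) (hNcont : Continuous N) (hε : 0 < ε)
    (v : H) : ∃ u, u = K (N u) + K v + ε • N u := by
  obtain ⟨A, hA⟩ := exists_continuousLinearEquiv_eq_add_smul hK hε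
  have hAsymm : StronglyMonotoneWith 0 A.symm := fun x y => by
    obtain ⟨w, hw⟩ := A.surjective (x - y)
    rw [zero_mul, ← map_sub, ← hw, A.symm_apply_apply, hA, inner_add_right, real_inner_smul_right,
      real_inner_comm]
    nlinarith [hK w, real_inner_self_nonneg (x := w)]
  obtain ⟨u, hu⟩ := (zero_add β ▸ hAsymm.add hN).surjective hβ
    (A.symm.continuous.add hNcont.neg) (A.symm (K v))
  refine ⟨u, ?_⟩
  have : A.symm (u - K v) = N u := by
    simp only [Pi.add_apply, Pi.neg_apply] at hu
    rw [map_sub, ← hu]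
    abel
  calc u = A (A.symm (u - K v)) + K v := by rw [A.apply_symm_apply, sub_add_cancel]
    _ = K (N u) + K v + ε • N u := by rw [this, hA]; abel

theorem sq_norm_le_of_eq_add_smul (hK : ∀ u, 0 ≤ ⟪K u, u⟫) (hN : StronglyMonotoneWith β (-N))
    (hε₀ : 0 ≤ ε) (hε₁ : ε ≤ 1) {u v : H} (hu : u = K (N u) + K v + ε • N u) :
    β * ‖u‖ ^ 2 ≤ ‖N 0 + v‖ * ‖u‖ + ‖v‖ ^ 2 / 4 := by
  have hmono : 0 ≤ ⟪u - ε • N u, N u + v⟫ := by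
    simpa only [map_add, eq_sub_of_add_eq hu.symm] using hK (N u + v)
  have hdiss : β * ‖u‖ ^ 2 ≤ ⟪N 0, u⟫ - ⟪N u, u⟫ := by
    simpa only [Pi.neg_apply, sub_zero, neg_sub_neg, inner_sub_left] using hN u 0
  have hsq : 0 ≤ ‖N u‖ ^ 2 + ⟪N u, v⟫ + ‖v‖ ^ 2 / 4 := by
    have := norm_add_sq_real (N u) ((1 / 2 : ℝ) • v)
    rw [norm_smul, real_inner_smul_right, Real.norm_eq_abs, abs_of_pos one_half_pos] at this
    nlinarith [sq_nonneg ‖N u + (1 / 2 : ℝ) • v‖]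
  have hCS := real_inner_le_norm (N 0 + v) u
  simp only [inner_add_left, inner_sub_left, inner_add_right, real_inner_smul_left,
    real_inner_self_eq_norm_sq] at hmono hCS
  nlinarith [mul_nonneg hε₀ hsq, mul_le_mul_of_nonneg_right hε₁ (sq_nonneg ‖v‖),
    real_inner_comm u (N u), real_inner_comm u v]

theorem isBounded_setOf_eq_add_smul (hK : ∀ u, 0 ≤ ⟪K u, u⟫) (hN : StronglyMonotoneWith β (-N))
    (hβ : 0 < β) (v : H) :
    Bornology.IsBounded {u : H | ∃ ε ∈ Icc (0 : ℝ) 1, u = K (N u) + K v + ε • N u} := by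
  rw [isBounded_iff_forall_norm_le]
  refine ⟨(‖N 0 + v‖ + ‖v‖ ^ 2 / 4) / β + 1, ?_⟩
  rintro u ⟨ε, ⟨hε₀, hε₁⟩, hu⟩
  have hsq := sq_norm_le_of_eq_add_smul hK hN hε₀ hε₁ hu
  rcases le_or_gt ‖u‖ 1 with hu1 | hu1
  · have : 0 ≤ (‖N 0 + v‖ + ‖v‖ ^ 2 / 4) / β := by positivity
    linarith
  · have : ‖u‖ ≤ (‖N 0 + v‖ + ‖v‖ ^ 2 / 4) / β := by
      rw [le_div_iff₀' hβ]
      nlinarith [sq_nonneg ‖v‖, norm_nonneg (N 0 + v)]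
    linarith

theorem eq_of_eq_add (hK : ∀ u, 0 ≤ ⟪K u, u⟫) (hN : StronglyMonotoneWith β (-N)) (hβ : 0 < β)
    {u₁ u₂ v : H} (h₁ : u₁ = K (N u₁) + K v) (h₂ : u₂ = K (N u₂) + K v) : u₁ = u₂ := by
  have hsub : u₁ - u₂ = K (N u₁ - N u₂) := by
    calc u₁ - u₂ = K (N u₁) + K v - (K (N u₂) + K v) := congrArg₂ (· - ·) h₁ h₂
      _ = K (N u₁ - N u₂) := by rw [map_sub]; abel
  have hinner : ⟪(-N) u₁ - (-N) u₂, u₁ - u₂⟫ = -⟪K (N u₁ - N u₂), N u₁ - N u₂⟫ := by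
    rw [hsub, Pi.neg_apply, Pi.neg_apply, neg_sub_neg, ← neg_sub (N u₁), inner_neg_left,
      real_inner_comm]
  have hdiss := hN u₁ u₂
  rw [hinner] at hdiss
  rw [← sub_eq_zero, ← real_inner_self_nonpos, real_inner_self_eq_norm_sq]
  nlinarith [hK (N u₁ - N u₂), sq_nonneg ‖u₁ - u₂‖]

theorem exists_eq_add [CompleteSpace H] (hKcomp : IsCompactOperator K)
    (hK : ∀ u, 0 ≤ ⟪K u, u⟫) (hN : StronglyMonotoneWith β (-N)) (hβ : 0 < β)
    (hNcont : Continuous N)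
    (hNbdd : ∀ s : Set H, Bornology.IsBounded s → Bornology.IsBounded (N '' s)) (v : H) :
    ∃ u, u = K (N u) + K v := by
  choose u hu using fun k : ℕ =>
    exists_eq_add_smul hK hN hβ hNcont (Nat.one_div_pos_of_nat (n := k)) v
  set S := {u : H | ∃ ε ∈ Icc (0 : ℝ) 1, u = K (N u) + K v + ε • N u}
  have huS : ∀ k, u k ∈ S := fun k =>
    ⟨_, ⟨Nat.one_div_pos_of_nat.le, div_le_one_of_le₀ (by simp) (by positivity)⟩, hu k⟩
  have hNS := hNbdd S (isBounded_setOf_eq_add_smul hK hN hβ v)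
  obtain ⟨C, hC, hKC⟩ := hKcomp.image_subset_compact_of_bounded (f := (K : H →ₗ[ℝ] H)) hNS
  obtain ⟨a, -, φ, hφ, ha⟩ := hC.tendsto_subseq fun k => hKC ⟨N (u k), ⟨u k, huS k, rfl⟩, rfl⟩
  obtain ⟨R, hR⟩ := isBounded_iff_forall_norm_le.mp hNS
  have hsmall : Tendsto (fun k => (1 / ((φ k : ℝ) + 1)) • N (u (φ k))) atTop (𝓝 0) :=
    (tendsto_one_div_add_atTop_nhds_zero_nat.comp hφ.tendsto_atTop).zero_smul_isBoundedUnder_le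
      (isBoundedUnder_of ⟨R, fun k => hR _ ⟨u (φ k), huS _, rfl⟩⟩)
  have hlim : Tendsto (u ∘ φ) atTop (𝓝 (a + K v)) := by
    have h := (ha.add_const (K v)).add hsmall
    rw [add_zero] at h
    exact h.congr fun k => (hu (φ k)).symm
  have hfix : a = K (N (a + K v)) :=
    tendsto_nhds_unique ha (((K.continuous.comp hNcont).tendsto (a + K v)).comp hlim)
  exact ⟨a + K v, congrArg (· + K v) hfix⟩

end Regularization

/-- If `K` is a compact monotone bounded linear operator on a real Hilbert
space and `N` is continuous, bounded (maps bounded sets to bounded sets), and strongly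
dissipative with constant `β > 0`, then for every `v` the equation `u = K (N u) + K v`
has exactly one solution. -/
theorem existence_uniqueness_fixed_point
    {H : Type*} [NormedAddCommGroup H] [InnerProductSpace ℝ H] [CompleteSpace H]
    (K : H →L[ℝ] H) (hKcomp : IsCompactOperator (⇑K))
    (hKmono : ∀ u : H, 0 ≤ ⟪K u, u⟫)
    (β : ℝ) (hβ : 0 < β)
    (N : H → H) (hNcont : Continuous N)
    (hNbdd : ∀ s : Set H, Bornology.IsBounded s → Bornology.IsBounded (N '' s))
    (hN : ∀ u₁ u₂ : H, ⟪N u₁ - N u₂, u₁ - u₂⟫ ≤ -β * ‖u₁ - u₂‖ ^ 2)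
    (v : H) :
    ∃! u : H, u = K (N u) + K v := by
  have hN' : StronglyMonotoneWith β (-N) := fun u₁ u₂ => by
    rw [Pi.neg_apply, Pi.neg_apply, neg_sub_neg, ← neg_sub (N u₁), inner_neg_left]
    linarith [hN u₁ u₂]
  obtain ⟨u, hu⟩ := exists_eq_add hKcomp hKmono hN' hβ hNcont hNbdd v
  exact ⟨u, hu, fun u' hu' => eq_of_eq_add hKmono hN' hβ hu' hu⟩
end

section
/- Let H be a real Hilbert space, let K : H → H be a compact bounded linear operator with ⟨K u, u⟩ ≥ 0 for all u ∈ H, let β > 0, and let N : H → H be continuous, map bounded subsets of H to bounded subsets of H, and satisfy ⟨N u₁ − N u₂, u₁ − u₂⟩ ≤ −β ‖u₁ − u₂‖² for all u₁, u₂ ∈ H. Suppose W : H → H is a map such that for every v ∈ H, W v is the unique solution of the equation u = K (N u) + K v. Then W is continuous, and W maps bounded subsets of H to relatively compact subsets of H. -/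
open scoped RealInnerProductSpace

/-- Under the hypotheses of Statement 12, the solution operator `W`,
assigning to each `v` the unique solution of `u = K (N u) + K v`, is continuous and
compact (maps bounded sets to relatively compact sets). -/
theorem solution_operator_continuous_compact
    {H : Type*} [NormedAddCommGroup H] [InnerProductSpace ℝ H] [CompleteSpace H]
    (K : H →L[ℝ] H) (hKcomp : IsCompactOperator (⇑K))
    (hKmono : ∀ u : H, 0 ≤ ⟪K u, u⟫)
    (β : ℝ) (hβ : 0 < β)
    (N : H → H) (hNcont : Continuous N)
    (hNbdd : ∀ s : Set H, Bornology.IsBounded s → Bornology.IsBounded (N '' s))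
    (hN : ∀ u₁ u₂ : H, ⟪N u₁ - N u₂, u₁ - u₂⟫ ≤ -β * ‖u₁ - u₂‖ ^ 2)
    (W : H → H)
    (hWsol : ∀ v : H, W v = K (N (W v)) + K v)
    (hWuniq : ∀ v u : H, u = K (N u) + K v → u = W v) :
    Continuous W ∧
      ∀ s : Set H, Bornology.IsBounded s → IsCompact (closure (W '' s)) := by
  -- Lipschitz estimate
  have key : ∀ v₁ v₂ : H, ‖W v₁ - W v₂‖ ≤ β⁻¹ * ‖v₁ - v₂‖ := by
    intro v₁ v₂
    set u₁ := W v₁ with hu₁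
    set u₂ := W v₂ with hu₂
    have hdiff : u₁ - u₂ = K (N u₁ - N u₂ + (v₁ - v₂)) := by
      have e1 : u₁ = K (N u₁) + K v₁ := hWsol v₁
      have e2 : u₂ = K (N u₂) + K v₂ := hWsol v₂
      rw [map_add, map_sub, map_sub]
      conv_lhs => rw [e1, e2]
      abel
    have hmono := hKmono (N u₁ - N u₂ + (v₁ - v₂))
    rw [← hdiff] at hmono
    rw [inner_add_right] at hmono
    have hsym : ⟪u₁ - u₂, N u₁ - N u₂⟫ = ⟪N u₁ - N u₂, u₁ - u₂⟫ := real_inner_comm _ _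
    have h1 : β * ‖u₁ - u₂‖ ^ 2 ≤ ⟪u₁ - u₂, v₁ - v₂⟫ := by
      have := hN u₁ u₂
      nlinarith [hmono, hsym]
    have h2 : ⟪u₁ - u₂, v₁ - v₂⟫ ≤ ‖u₁ - u₂‖ * ‖v₁ - v₂‖ := real_inner_le_norm _ _
    rcases eq_or_lt_of_le (norm_nonneg (u₁ - u₂)) with h0 | h0
    · rw [← h0]
      positivity
    · have h3 : β * ‖u₁ - u₂‖ ≤ ‖v₁ - v₂‖ :=
        le_of_mul_le_mul_right (by nlinarith) h0
      exact (le_inv_mul_iff₀ hβ).mpr h3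
  have hlip : LipschitzWith (Real.toNNReal β⁻¹) W := by
    apply LipschitzWith.of_dist_le_mul
    intro x y
    rw [dist_eq_norm, dist_eq_norm]
    rw [Real.coe_toNNReal _ (by positivity : (0:ℝ) ≤ β⁻¹)]
    exact key x y
  refine ⟨hlip.continuous, ?_⟩
  intro s hs
  -- W '' s is bounded
  have hWs : Bornology.IsBounded (W '' s) := by
    obtain ⟨C, hC⟩ := hs.exists_norm_le
    apply isBounded_iff_forall_norm_le.mpr
    refine ⟨‖W 0‖ + β⁻¹ * C, ?_⟩
    rintro _ ⟨v, hv, rfl⟩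
    have h1 : ‖W v - W 0‖ ≤ β⁻¹ * ‖v - 0‖ := key v 0
    rw [sub_zero] at h1
    have h2 : ‖v‖ ≤ C := hC v hv
    have := norm_sub_norm_le (W v) (W 0)
    have : β⁻¹ * ‖v‖ ≤ β⁻¹ * C := mul_le_mul_of_nonneg_left h2 (by positivity)
    linarith [norm_sub_norm_le (W v) (W 0)]
  -- the set B = (fun v => N (W v) + v) '' s is bounded
  have hB : Bornology.IsBounded ((fun v => N (W v) + v) '' s) := by
    have hNws := hNbdd _ hWs
    obtain ⟨C₁, hC₁⟩ := hNws.exists_norm_le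
    obtain ⟨C₂, hC₂⟩ := hs.exists_norm_le
    apply isBounded_iff_forall_norm_le.mpr
    refine ⟨C₁ + C₂, ?_⟩
    rintro _ ⟨v, hv, rfl⟩
    have h1 : ‖N (W v)‖ ≤ C₁ := hC₁ _ ⟨W v, ⟨v, hv, rfl⟩, rfl⟩
    have h2 : ‖v‖ ≤ C₂ := hC₂ v hv
    calc ‖N (W v) + v‖ ≤ ‖N (W v)‖ + ‖v‖ := norm_add_le _ _
      _ ≤ C₁ + C₂ := by linarith
  -- W '' s ⊆ K '' B
  have hsub : W '' s ⊆ ⇑K '' ((fun v => N (W v) + v) '' s) := by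
    rintro _ ⟨v, hv, rfl⟩
    refine ⟨N (W v) + v, ⟨v, hv, rfl⟩, ?_⟩
    rw [map_add, ← hWsol v]
  have hKB : IsCompact (closure (⇑K '' ((fun v => N (W v) + v) '' s))) := by
    have : IsCompactOperator (⇑(K : H →ₗ[ℝ] H)) := hKcomp
    exact this.isCompact_closure_image_of_bounded hB
  exact hKB.of_isClosed_subset isClosed_closure (closure_mono hsub)
end
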